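/- Poincaré-like inequality for epi-2D (Clebsch) fields: let w = ∇φ + ψ∇θ be smooth on Ω̄ with w·n = 0 on ∂Ω and |w·(∇×w)| ≥ ε > 0 on Ω, where φ, ψ, θ are smooth on Ω̄. Then for all u ∈ C¹(Ω̄) vanishing on ∂Ω, ‖∇⊥u‖ ≥ (ε/(2ν))‖u‖ with ν = sup_{Ω̄} |w||∇φ|. -/

import Mathlib

open MeasureTheory Real Set

noncomputable section

abbrev V3 : Type := Fin 3 → ℝ

/-- Euclidean dot product on ℝ³. -/
def dot3 (a b : V3) : ℝ := ∑ i, a i * b i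

/-- Euclidean norm on ℝ³. -/
def nrm (a : V3) : ℝ := Real.sqrt (dot3 a a)

/-- Cross product on ℝ³. -/
def cross3 (a b : V3) : V3 :=
  ![a 1 * b 2 - a 2 * b 1, a 2 * b 0 - a 0 * b 2, a 0 * b 1 - a 1 * b 0]

/-- Partial derivative in the `i`-th coordinate direction. -/
def pd (i : Fin 3) (f : V3 → ℝ) (x : V3) : ℝ := fderiv ℝ f x (Pi.single i 1)

/-- Gradient of a scalar function. -/
def grad3 (f : V3 → ℝ) (x : V3) : V3 := fun i => pd i f x

/-- Curl of a vector field. -/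
def curl3 (w : V3 → V3) (x : V3) : V3 :=
  ![pd 1 (fun y => w y 2) x - pd 2 (fun y => w y 1) x,
    pd 2 (fun y => w y 0) x - pd 0 (fun y => w y 2) x,
    pd 0 (fun y => w y 1) x - pd 1 (fun y => w y 0) x]

/-- Divergence of a vector field. -/
def divg (w : V3 → V3) (x : V3) : ℝ := ∑ i, pd i (fun y => w y i) x

/-- Normalized vector field ŵ = w/|w|. -/
def hatw (w : V3 → V3) (x : V3) : V3 := (nrm (w x))⁻¹ • w x

/-- Orthogonal gradient ∇⊥u = ŵ × (∇u × ŵ). -/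
def oGrad (w : V3 → V3) (u : V3 → ℝ) (x : V3) : V3 :=
  cross3 (hatw w x) (cross3 (grad3 u x) (hatw w x))

/-- `Ω` is a smoothly bounded domain described by a defining function `F`
(`Ω = {F < 0}`, `∂Ω = {F = 0}`, `∇F ≠ 0` on `∂Ω`) and the vector field `w` is
tangent to the boundary: `w·n = 0` on `∂Ω` (the outward normal `n` is parallel
to `∇F`). -/
def TangentBC (Ω : Set V3) (w : V3 → V3) : Prop :=
  ∃ F : V3 → ℝ, ContDiff ℝ (⊤ : ℕ∞) F ∧ Ω = {x | F x < 0} ∧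
    frontier Ω = {x | F x = 0} ∧
    ∀ x ∈ frontier Ω, grad3 F x ≠ 0 ∧ dot3 (w x) (grad3 F x) = 0

section VecAlg

lemma dot3_self_nonneg (a : V3) : 0 ≤ dot3 a a := by
  simp only [dot3, Fin.sum_univ_three]
  nlinarith [mul_self_nonneg (a 0), mul_self_nonneg (a 1), mul_self_nonneg (a 2)]

lemma nrm_nonneg (a : V3) : 0 ≤ nrm a := Real.sqrt_nonneg _

lemma nrm_sq (a : V3) : nrm a ^ 2 = dot3 a a := Real.sq_sqrt (dot3_self_nonneg a)

lemma nrm_pos (a : V3) (ha : a ≠ 0) : 0 < nrm a := by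
  apply Real.sqrt_pos.2
  rcases lt_or_eq_of_le (dot3_self_nonneg a) with h | h
  · exact h
  · exfalso; apply ha
    funext i
    have h' : a 0 * a 0 + a 1 * a 1 + a 2 * a 2 = 0 := by
      simpa [dot3, Fin.sum_univ_three] using h.symm
    have h0 : a 0 = 0 := by nlinarith [sq_nonneg (a 0), sq_nonneg (a 1), sq_nonneg (a 2)]
    have h1 : a 1 = 0 := by nlinarith [sq_nonneg (a 0), sq_nonneg (a 1), sq_nonneg (a 2)]
    have h2 : a 2 = 0 := by nlinarith [sq_nonneg (a 0), sq_nonneg (a 1), sq_nonneg (a 2)]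
    fin_cases i <;> simp [h0, h1, h2]

lemma abs_dot3_le (a b : V3) : |dot3 a b| ≤ nrm a * nrm b := by
  have h2 : (dot3 a b) ^ 2 ≤ (nrm a * nrm b) ^ 2 := by
    rw [mul_pow, nrm_sq, nrm_sq]
    simp only [dot3, Fin.sum_univ_three]
    nlinarith [sq_nonneg (a 0 * b 1 - a 1 * b 0), sq_nonneg (a 0 * b 2 - a 2 * b 0),
      sq_nonneg (a 1 * b 2 - a 2 * b 1)]
  calc |dot3 a b| = Real.sqrt ((dot3 a b) ^ 2) := (Real.sqrt_sq_eq_abs _).symm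
    _ ≤ Real.sqrt ((nrm a * nrm b) ^ 2) := Real.sqrt_le_sqrt h2
    _ = nrm a * nrm b := Real.sqrt_sq (mul_nonneg (nrm_nonneg a) (nrm_nonneg b))

lemma nrm_cross3_le (a b : V3) : nrm (cross3 a b) ≤ nrm a * nrm b := by
  have h2 : dot3 (cross3 a b) (cross3 a b) ≤ dot3 a a * dot3 b b := by
    simp only [dot3, cross3, Fin.sum_univ_three]
    simp only [Matrix.cons_val_zero, Matrix.cons_val_one, Matrix.head_cons,
      Matrix.cons_val_two, Matrix.tail_cons]
    nlinarith [sq_nonneg (a 0 * b 0 + a 1 * b 1 + a 2 * b 2)]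
  calc nrm (cross3 a b) = Real.sqrt (dot3 (cross3 a b) (cross3 a b)) := rfl
    _ ≤ Real.sqrt (dot3 a a * dot3 b b) := Real.sqrt_le_sqrt h2
    _ = nrm a * nrm b := by
        rw [nrm, nrm, ← Real.sqrt_mul (dot3_self_nonneg a)]

lemma dot3_cross_cross (p q r : V3) :
    dot3 (cross3 p (cross3 q p)) r = dot3 p p * dot3 q r - dot3 p q * dot3 p r := by
  simp only [dot3, cross3, Fin.sum_univ_three]
  simp only [Matrix.cons_val_zero, Matrix.cons_val_one, Matrix.head_cons,
    Matrix.cons_val_two, Matrix.tail_cons]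
  ring

lemma dot3_comm (a b : V3) : dot3 a b = dot3 b a := by
  simp only [dot3, Fin.sum_univ_three]; ring

end VecAlg
section PD

lemma HasFDerivAt.pd_eq {f : V3 → ℝ} {f' : V3 →L[ℝ] ℝ} {x : V3}
    (h : HasFDerivAt f f' x) (i : Fin 3) : pd i f x = f' (Pi.single i 1) := by
  rw [pd, h.fderiv]

lemma pd_add {f g : V3 → ℝ} {x : V3} (hf : DifferentiableAt ℝ f x)
    (hg : DifferentiableAt ℝ g x) (i : Fin 3) :
    pd i (fun y => f y + g y) x = pd i f x + pd i g x := by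
  rw [pd, fderiv_fun_add hf hg]; rfl

lemma pd_mul {f g : V3 → ℝ} {x : V3} (hf : DifferentiableAt ℝ f x)
    (hg : DifferentiableAt ℝ g x) (i : Fin 3) :
    pd i (fun y => f y * g y) x = f x * pd i g x + g x * pd i f x := by
  rw [pd, fderiv_fun_mul hf hg]; rfl

lemma pd_sub {f g : V3 → ℝ} {x : V3} (hf : DifferentiableAt ℝ f x)
    (hg : DifferentiableAt ℝ g x) (i : Fin 3) :
    pd i (fun y => f y - g y) x = pd i f x - pd i g x := by
  rw [pd, fderiv_fun_sub hf hg]; rfl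

lemma contDiff_pd {f : V3 → ℝ} (hf : ContDiff ℝ (⊤ : ℕ∞) f) (i : Fin 3) :
    ContDiff ℝ (⊤ : ℕ∞) (fun x => pd i f x) := by
  have h1 : ContDiff ℝ (⊤ : ℕ∞) (fun x => fderiv ℝ f x) :=
    hf.fderiv_right (m := (⊤ : ℕ∞)) (by exact_mod_cast le_top)
  exact h1.clm_apply contDiff_const

lemma continuous_pd {f : V3 → ℝ} (hf : ContDiff ℝ 1 f) (i : Fin 3) :
    Continuous (fun x => pd i f x) := by
  have h1 : Continuous (fun x => fderiv ℝ f x) := hf.continuous_fderiv one_ne_zero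
  exact (ContinuousLinearMap.apply ℝ ℝ (Pi.single i 1 : V3)).continuous.comp h1

lemma hasFDerivAt_pd {f : V3 → ℝ} (hf : ContDiff ℝ (⊤ : ℕ∞) f) (j : Fin 3) (x : V3) :
    HasFDerivAt (fun y => pd j f y)
      ((ContinuousLinearMap.apply ℝ ℝ (Pi.single j 1 : V3)).comp
        (fderiv ℝ (fderiv ℝ f) x)) x := by
  have h1 : HasFDerivAt (fderiv ℝ f) (fderiv ℝ (fderiv ℝ f) x) x :=
    (((hf.fderiv_right (m := (⊤ : ℕ∞)) (by exact_mod_cast le_top)).differentiable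
      (by simp)) x).hasFDerivAt
  exact ((ContinuousLinearMap.apply ℝ ℝ (Pi.single j 1 : V3)).hasFDerivAt).comp x h1

lemma pd_pd {f : V3 → ℝ} (hf : ContDiff ℝ (⊤ : ℕ∞) f) (i j : Fin 3) (x : V3) :
    pd i (fun y => pd j f y) x = fderiv ℝ (fderiv ℝ f) x (Pi.single i 1) (Pi.single j 1) := by
  rw [(hasFDerivAt_pd hf j x).pd_eq i]; rfl

lemma pd_symm {f : V3 → ℝ} (hf : ContDiff ℝ (⊤ : ℕ∞) f) (i j : Fin 3) (x : V3) :
    pd i (fun y => pd j f y) x = pd j (fun y => pd i f y) x := by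
  rw [pd_pd hf i j, pd_pd hf j i]
  exact (hf.contDiffAt.isSymmSndFDerivAt (by rw [minSmoothness_of_isRCLikeNormedField]; exact WithTop.coe_le_coe.2 le_top)) _ _

end PD
section DivKey

lemma pd_mulsub {f g h k : V3 → ℝ} {x : V3} (hf : DifferentiableAt ℝ f x)
    (hg : DifferentiableAt ℝ g x) (hh : DifferentiableAt ℝ h x)
    (hk : DifferentiableAt ℝ k x) (i : Fin 3) :
    pd i (fun y => f y * g y - h y * k y) x
      = (f x * pd i g x + g x * pd i f x) - (h x * pd i k x + k x * pd i h x) := by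
  rw [pd_sub (f := fun y => f y * g y) (g := fun y => h y * k y) (hf.mul hg) (hh.mul hk), pd_mul hf hg, pd_mul hh hk]

lemma div_cross_eq (φ ψ θ : V3 → ℝ) (hφ : ContDiff ℝ (⊤ : ℕ∞) φ)
    (hψ : ContDiff ℝ (⊤ : ℕ∞) ψ) (hθ : ContDiff ℝ (⊤ : ℕ∞) θ)
    (w : V3 → V3) (hwdef : w = fun x => grad3 φ x + ψ x • grad3 θ x) (x : V3) :
    divg (fun y => cross3 (w y) (grad3 φ y)) x = dot3 (w x) (curl3 w x) := by
  have hwj : ∀ j : Fin 3, (fun y => w y j) = fun y => pd j φ y + ψ y * pd j θ y := by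
    intro j; funext y; rw [hwdef]; simp [grad3, smul_eq_mul]
  have dP : ∀ j : Fin 3, DifferentiableAt ℝ (fun y => pd j φ y) x :=
    fun j => ((contDiff_pd hφ j).differentiable (by norm_cast)).differentiableAt
  have dT : ∀ j : Fin 3, DifferentiableAt ℝ (fun y => pd j θ y) x :=
    fun j => ((contDiff_pd hθ j).differentiable (by norm_cast)).differentiableAt
  have dS : DifferentiableAt ℝ ψ x := (hψ.differentiable (by norm_cast)).differentiableAt
  have dwj : ∀ j : Fin 3, DifferentiableAt ℝ (fun y => w y j) x := by
    intro j; rw [hwj j]; exact (dP j).add (dS.mul (dT j))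
  have pdw : ∀ i j : Fin 3, pd i (fun y => w y j) x
      = pd i (fun y => pd j φ y) x + (ψ x * pd i (fun y => pd j θ y) x
        + pd j θ x * pd i ψ x) := by
    intro i j
    rw [hwj j, pd_add (g := fun y => ψ y * pd j θ y) (dP j) (dS.mul (dT j)) i, pd_mul dS (dT j) i]
  have hwx : ∀ j : Fin 3, w x j = pd j φ x + ψ x * pd j θ x := by
    intro j; rw [hwdef]; simp [grad3, smul_eq_mul]
  simp only [divg, dot3, curl3, cross3, grad3, Fin.sum_univ_three,
    Matrix.cons_val_zero, Matrix.cons_val_one, Matrix.head_cons,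
    Matrix.cons_val_two, Matrix.tail_cons]
  rw [pd_mulsub (dwj 1) (dP 2) (dwj 2) (dP 1) 0,
      pd_mulsub (dwj 2) (dP 0) (dwj 0) (dP 2) 1,
      pd_mulsub (dwj 0) (dP 1) (dwj 1) (dP 0) 2]
  simp only [pdw, hwx]
  rw [pd_symm hφ 1 0 x, pd_symm hφ 2 0 x, pd_symm hφ 2 1 x,
      pd_symm hθ 1 0 x, pd_symm hθ 2 0 x, pd_symm hθ 2 1 x]
  ring

end DivKey
section QDeriv

lemma one_le_wtop : (1 : WithTop ℕ∞) ≤ ((⊤ : ℕ∞) : WithTop ℕ∞) := by norm_cast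

lemma hasFDerivAt_sq {u : V3 → ℝ} (hu : ContDiff ℝ 1 u) (x : V3) :
    HasFDerivAt (fun y => u y ^ 2) ((2 * u x) • fderiv ℝ u x) x := by
  have hud : HasFDerivAt u (fderiv ℝ u x) x :=
    ((hu.differentiable one_ne_zero) x).hasFDerivAt
  have h : (fun y : V3 => u y ^ 2) = fun y => u y * u y := by funext y; ring
  rw [h]
  rw [two_mul, add_smul]
  exact hud.fun_mul hud

lemma divQ {u : V3 → ℝ} (hu : ContDiff ℝ 1 u) {a : V3 → V3}
    (ha : ContDiff ℝ (⊤ : ℕ∞) a) (x : V3) :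
    (∑ i, fderiv ℝ (fun y => u y ^ 2 • a y) x (Pi.single i 1) i)
      = u x ^ 2 * divg a x + 2 * u x * dot3 (grad3 u x) (a x) := by
  have hAd : HasFDerivAt a (fderiv ℝ a x) x :=
    ((ha.differentiable (by simp)) x).hasFDerivAt
  have hQ : HasFDerivAt (fun y => u y ^ 2 • a y)
      (u x ^ 2 • fderiv ℝ a x + ((2 * u x) • fderiv ℝ u x).smulRight (a x)) x :=
    (hasFDerivAt_sq hu x).smul hAd
  have hpda : ∀ i : Fin 3, pd i (fun y => a y i) x = fderiv ℝ a x (Pi.single i 1) i := by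
    intro i
    have h := (ContinuousLinearMap.proj (R := ℝ) (φ := fun _ : Fin 3 => ℝ) i).hasFDerivAt.comp
      x hAd
    have h' : HasFDerivAt (fun y => a y i) ((ContinuousLinearMap.proj (R := ℝ)
        (φ := fun _ : Fin 3 => ℝ) i).comp (fderiv ℝ a x)) x := h
    rw [h'.pd_eq i]; rfl
  simp only [hQ.fderiv, divg, dot3, grad3, Fin.sum_univ_three,
    ContinuousLinearMap.add_apply, ContinuousLinearMap.smul_apply,
    ContinuousLinearMap.smulRight_apply, Pi.add_apply, Pi.smul_apply, smul_eq_mul, hpda]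
  unfold pd
  ring

end QDeriv
section IntId

lemma integral_identity
    (Ω : Set V3) (hΩ : IsOpen Ω) (hbdd : Bornology.IsBounded Ω)
    (a : V3 → V3) (ha : ContDiff ℝ (⊤ : ℕ∞) a)
    (u : V3 → ℝ) (hu : ContDiff ℝ 1 u) (hubdry : ∀ x ∈ frontier Ω, u x = 0) :
    ∫ x in Ω, (u x ^ 2 * divg a x + 2 * u x * dot3 (grad3 u x) (a x)) = 0 := by
  classical
  set Q : V3 → V3 := fun y => u y ^ 2 • a y with hQdef
  have hadiff : Differentiable ℝ a := ha.differentiable (by simp)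
  have hQdiff : Differentiable ℝ Q := fun x =>
    (((hu.differentiable one_ne_zero) x).pow 2).smul (hadiff x)
  set G : V3 → V3 := Ω.indicator Q with hGdef
  set G' : V3 → (V3 →L[ℝ] V3) := Ω.indicator (fun x => fderiv ℝ Q x) with hG'def
  have hGd : ∀ x, HasFDerivAt G (G' x) x := by
    intro x
    by_cases hx : x ∈ Ω
    · have hev : G =ᶠ[nhds x] Q := by
        filter_upwards [hΩ.mem_nhds hx] with y hy
        exact Set.indicator_of_mem hy Q
      have hgx : G' x = fderiv ℝ Q x := Set.indicator_of_mem hx _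
      rw [hgx]
      exact ((hQdiff x).hasFDerivAt).congr_of_eventuallyEq hev
    · have hG'x : G' x = 0 := Set.indicator_of_notMem hx _
      rw [hG'x]
      by_cases hx' : x ∈ closure Ω
      · have hxf : x ∈ frontier Ω := by
          rw [frontier, hΩ.interior_eq]; exact ⟨hx', hx⟩
        have hux : u x = 0 := hubdry x hxf
        have h2 : HasFDerivAt (fun y => u y ^ 2) (0 : V3 →L[ℝ] ℝ) x := by
          have h := hasFDerivAt_sq hu x
          rw [hux] at h; simpa using h
        have hlo : (fun y : V3 => u y ^ 2) =o[nhds x] (fun y : V3 => y - x) := by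
          have h := h2.isLittleO
          simpa [hux] using h
        have hbig : (fun y : V3 => G y) =O[nhds x] (fun y : V3 => u y ^ 2) := by
          rw [Asymptotics.isBigO_iff]
          refine ⟨‖a x‖ + 1, ?_⟩
          filter_upwards [(ha.continuous.norm.tendsto x).eventually
            (eventually_le_nhds (lt_add_one ‖a x‖))] with y hy
          calc ‖G y‖ ≤ ‖Q y‖ := norm_indicator_le_norm_self Q y
            _ = ‖u y ^ 2‖ * ‖a y‖ := by rw [hQdef]; simp [norm_smul]
            _ ≤ ‖u y ^ 2‖ * (‖a x‖ + 1) := by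
                exact mul_le_mul_of_nonneg_left hy (norm_nonneg _)
            _ = (‖a x‖ + 1) * ‖u y ^ 2‖ := mul_comm _ _
        show HasFDerivAt G 0 x
        rw [hasFDerivAt_iff_isLittleO]
        have hGx : G x = 0 := Set.indicator_of_notMem hx Q
        simpa [hGx] using hbig.trans_isLittleO hlo
      · have hev : G =ᶠ[nhds x] (fun _ => (0 : V3)) := by
          filter_upwards [(isClosed_closure (s := Ω)).isOpen_compl.mem_nhds hx'] with y hy
          exact Set.indicator_of_notMem (fun h => hy (subset_closure h)) Q
        exact (hasFDerivAt_const (0 : V3) x).congr_of_eventuallyEq hev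
  -- choose a big box
  obtain ⟨R₀, hR₀⟩ := hbdd.subset_ball (0 : V3)
  set R : ℝ := max R₀ 0 + 1 with hRdef
  have hRpos : 0 < R := by positivity
  have hclos : closure Ω ⊆ Metric.closedBall 0 (max R₀ 0) := by
    calc closure Ω ⊆ closure (Metric.ball 0 R₀) := closure_mono hR₀
      _ ⊆ Metric.closedBall 0 R₀ := Metric.closure_ball_subset_closedBall
      _ ⊆ Metric.closedBall 0 (max R₀ 0) := Metric.closedBall_subset_closedBall (le_max_left _ _)
  have hcoord : ∀ x ∈ closure Ω, ∀ i : Fin 3, |x i| ≤ max R₀ 0 := by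
    intro x hx i
    have h1 := hclos hx
    rw [Metric.mem_closedBall] at h1
    have h2 : dist (x i) ((0 : V3) i) ≤ dist x 0 := dist_le_pi_dist x 0 i
    simpa [Real.dist_eq] using h2.trans h1
  set A : V3 := fun _ => -R with hAdef
  set B : V3 := fun _ => R with hBdef
  have hle : A ≤ B := fun i => by
    simp only [hAdef, hBdef]; linarith
  have hIoo : ∀ x ∈ closure Ω, x ∈ Set.pi Set.univ fun i => Ioo (A i) (B i) := by
    intro x hx
    intro i _
    have := hcoord x hx i
    have h1 : |x i| < R := lt_of_le_of_lt this (by rw [hRdef]; linarith)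
    rw [abs_lt] at h1
    exact ⟨h1.1, h1.2⟩
  have hsubIcc : Ω ⊆ Set.Icc A B := by
    intro x hx
    have := hIoo x (subset_closure hx)
    rw [Set.mem_Icc]
    constructor <;> intro i <;> have h := this i (Set.mem_univ i) <;>
      [exact (h.1).le; exact (h.2).le]
  set h : V3 → ℝ := fun x => u x ^ 2 * divg a x + 2 * u x * dot3 (grad3 u x) (a x) with hhdef
  have hsum : (fun x => ∑ i, G' x (Pi.single i 1) i) = Ω.indicator h := by
    funext x
    by_cases hx : x ∈ Ω
    · rw [hG'def, Set.indicator_of_mem hx, Set.indicator_of_mem hx, hhdef]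
      exact divQ hu ha x
    · rw [hG'def, Set.indicator_of_notMem hx, Set.indicator_of_notMem hx]
      simp
  have ha1 : ContDiff ℝ 1 a := ha.of_le one_le_wtop
  have hdivc : Continuous fun x => divg a x := by
    have hc : ∀ i : Fin 3, Continuous fun x => pd i (fun y => a y i) x := fun i =>
      continuous_pd (contDiff_pi.mp ha1 i) i
    have : (fun x => divg a x) = fun x => ∑ i : Fin 3, pd i (fun y => a y i) x := rfl
    rw [this]
    exact continuous_finset_sum _ fun i _ => hc i
  have hgc : ∀ i : Fin 3, Continuous fun x => grad3 u x i := fun i => continuous_pd hu i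
  have hac : ∀ i : Fin 3, Continuous fun x => a x i := fun i =>
    (continuous_apply i).comp ha.continuous
  have hdotc : Continuous fun x => dot3 (grad3 u x) (a x) := by
    have : (fun x => dot3 (grad3 u x) (a x))
        = fun x => ∑ i : Fin 3, grad3 u x i * a x i := rfl
    rw [this]
    exact continuous_finset_sum _ fun i _ => (hgc i).mul (hac i)
  have hhc : Continuous h := by
    rw [hhdef]
    exact (((hu.continuous.pow 2).mul hdivc)).add
      (((continuous_const.mul hu.continuous)).mul hdotc)
  have Hi : MeasureTheory.IntegrableOn (fun x => ∑ i, G' x (Pi.single i 1) i)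
      (Set.Icc A B) := by
    rw [hsum]
    exact (hhc.continuousOn.integrableOn_compact isCompact_Icc).indicator hΩ.measurableSet
  have Hc : ContinuousOn G (Set.Icc A B) :=
    (continuous_iff_continuousAt.2 fun x => (hGd x).continuousAt).continuousOn
  have Hd : ∀ x ∈ (Set.pi Set.univ fun i => Ioo (A i) (B i)) \ (∅ : Set V3),
      HasFDerivAt G (G' x) x := fun x _ => hGd x
  have key := MeasureTheory.integral_divergence_of_hasFDerivAt_off_countable
    (n := 2) A B hle G G' ∅ Set.countable_empty Hc Hd Hi
  have hGzero : ∀ (i : Fin 3) (c : ℝ), R ≤ |c| → ∀ y : Fin 2 → ℝ,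
      G (Fin.insertNth i c y) = 0 := by
    intro i c hc y
    apply Set.indicator_of_notMem
    intro hmem
    have := hcoord _ (subset_closure hmem) i
    rw [Fin.insertNth_apply_same] at this
    have : R ≤ max R₀ 0 := le_trans hc this
    rw [hRdef] at this; linarith
  have hRHS : (∑ i : Fin 3,
      ((∫ x in Set.Icc (A ∘ Fin.succAbove i) (B ∘ Fin.succAbove i),
          G (Fin.insertNth i (B i) x) i) -
        ∫ x in Set.Icc (A ∘ Fin.succAbove i) (B ∘ Fin.succAbove i),
          G (Fin.insertNth i (A i) x) i)) = 0 := by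
    apply Finset.sum_eq_zero
    intro i _
    have h1 : ∀ y : Fin 2 → ℝ, G (Fin.insertNth i (B i) y) i = 0 := by
      intro y; rw [hGzero i (B i) (by rw [hBdef]; simp [abs_of_pos hRpos]) y]; rfl
    have h2 : ∀ y : Fin 2 → ℝ, G (Fin.insertNth i (A i) y) i = 0 := by
      intro y
      rw [hGzero i (A i) (by rw [hAdef]; simp [abs_of_pos hRpos, abs_neg]) y]; rfl
    simp [h1, h2]
  rw [hRHS] at key
  rw [hsum] at key
  rw [MeasureTheory.setIntegral_indicator hΩ.measurableSet,
    Set.inter_eq_self_of_subset_right hsubIcc] at key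
  exact key

end IntId
section Sign

lemma sign_dichotomy (Ω : Set V3) (hconn : IsConnected Ω) {s : V3 → ℝ} (hs : Continuous s)
    {ε : ℝ} (hε : 0 < ε) (hhel : ∀ x ∈ Ω, ε ≤ |s x|) :
    (∀ x ∈ Ω, ε ≤ s x) ∨ (∀ x ∈ Ω, s x ≤ -ε) := by
  by_contra hcon
  push_neg at hcon
  obtain ⟨⟨x1, hx1, hx1'⟩, ⟨x2, hx2, hx2'⟩⟩ := hcon
  have h1 : s x1 ≤ -ε := by
    rcases abs_cases (s x1) with ⟨h, _⟩ | ⟨h, _⟩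
    · exfalso; have := hhel x1 hx1; rw [h] at this; linarith
    · have := hhel x1 hx1; rw [h] at this; linarith
  have h2 : ε ≤ s x2 := by
    rcases abs_cases (s x2) with ⟨h, _⟩ | ⟨h, _⟩
    · have := hhel x2 hx2; rw [h] at this; linarith
    · exfalso; have := hhel x2 hx2; rw [h] at this; linarith
  have h0 : (0 : ℝ) ∈ Icc (s x1) (s x2) := ⟨by linarith, by linarith⟩
  obtain ⟨x0, hx0, hx0'⟩ :=
    hconn.isPreconnected.intermediate_value hx1 hx2 hs.continuousOn h0
  have := hhel x0 hx0
  rw [hx0'] at this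
  simp only [abs_zero] at this
  linarith

end Sign

section Cont

lemma continuous_nrm : Continuous nrm := by
  have : Continuous fun a : V3 => dot3 a a := by
    have : (fun a : V3 => dot3 a a) = fun a => ∑ i : Fin 3, a i * a i := rfl
    rw [this]
    exact continuous_finset_sum _ fun i _ => (continuous_apply i).mul (continuous_apply i)
  exact Real.continuous_sqrt.comp this

lemma continuousOn_cross3 {f g : V3 → V3} {s : Set V3} (hf : ContinuousOn f s)
    (hg : ContinuousOn g s) : ContinuousOn (fun x => cross3 (f x) (g x)) s := by
  have hfj : ∀ j : Fin 3, ContinuousOn (fun x => f x j) s := fun j =>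
    (continuous_apply j).comp_continuousOn hf
  have hgj : ∀ j : Fin 3, ContinuousOn (fun x => g x j) s := fun j =>
    (continuous_apply j).comp_continuousOn hg
  apply continuousOn_pi.2
  intro i
  fin_cases i <;> simp only [cross3, Matrix.cons_val_zero, Matrix.cons_val_one,
    Matrix.head_cons, Matrix.cons_val_two, Matrix.tail_cons] <;>
  exact (((hfj _).mul (hgj _)).sub ((hfj _).mul (hgj _)))

lemma continuousOn_dot3 {f g : V3 → V3} {s : Set V3} (hf : ContinuousOn f s)
    (hg : ContinuousOn g s) : ContinuousOn (fun x => dot3 (f x) (g x)) s := by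
  have : (fun x => dot3 (f x) (g x)) = fun x => ∑ i : Fin 3, f x i * g x i := rfl
  rw [this]
  exact continuousOn_finset_sum _ fun i _ =>
    (((continuous_apply i).comp_continuousOn hf).mul ((continuous_apply i).comp_continuousOn hg))

lemma continuous_grad3 {u : V3 → ℝ} (hu : ContDiff ℝ 1 u) :
    Continuous fun x => grad3 u x :=
  continuous_pi fun i => continuous_pd hu i

end Cont
section Key

lemma dot3_smul_left (c : ℝ) (v b : V3) : dot3 (c • v) b = c * dot3 v b := by
  simp only [dot3, Fin.sum_univ_three, Pi.smul_apply, smul_eq_mul]; ring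

lemma dot3_smul_right (c : ℝ) (v b : V3) : dot3 v (c • b) = c * dot3 v b := by
  simp only [dot3, Fin.sum_univ_three, Pi.smul_apply, smul_eq_mul]; ring

lemma continuous_dot3 {f g : V3 → V3} (hf : Continuous f) (hg : Continuous g) :
    Continuous (fun x => dot3 (f x) (g x)) := by
  have : (fun x => dot3 (f x) (g x)) = fun x => ∑ i : Fin 3, f x i * g x i := rfl
  rw [this]
  exact continuous_finset_sum _ fun i _ =>
    (((continuous_apply i).comp hf).mul ((continuous_apply i).comp hg))

lemma key_estimate (Ω : Set V3) (hΩ : IsOpen Ω) (hbdd : Bornology.IsBounded Ω)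
    (w : V3 → V3) (hwc : Continuous w) (hw0 : ∀ x ∈ closure Ω, w x ≠ 0)
    (a : V3 → V3) (ha : ContDiff ℝ (⊤ : ℕ∞) a)
    (horth : ∀ x, dot3 (a x) (w x) = 0)
    (ε ν : ℝ) (hε : 0 < ε) (hν : 0 < ν)
    (hdiv : ∀ x ∈ Ω, ε ≤ divg a x)
    (hbnd : ∀ x ∈ Ω, nrm (a x) ≤ ν)
    (u : V3 → ℝ) (hu : ContDiff ℝ 1 u) (hubdry : ∀ x ∈ frontier Ω, u x = 0) :
    (ε / (2 * ν)) * Real.sqrt (∫ x in Ω, u x ^ 2) ≤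
      Real.sqrt (∫ x in Ω, dot3 (oGrad w u x) (oGrad w u x)) := by
  classical
  set og := fun x => oGrad w u x with hogdef
  have hdot : ∀ x ∈ Ω, dot3 (grad3 u x) (a x) = dot3 (og x) (a x) := by
    intro x hx
    have hwx : w x ≠ 0 := hw0 x (subset_closure hx)
    have hnw : 0 < nrm (w x) := nrm_pos _ hwx
    have hpp : dot3 (hatw w x) (hatw w x) = 1 := by
      rw [hatw, dot3_smul_left, dot3_smul_right, ← nrm_sq]
      field_simp
    have hpa : dot3 (hatw w x) (a x) = 0 := by
      rw [hatw, dot3_smul_left, dot3_comm, horth, mul_zero]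
    have h := dot3_cross_cross (hatw w x) (grad3 u x) (a x)
    rw [hpp, hpa, one_mul, mul_zero, sub_zero] at h
    rw [hogdef]
    exact h.symm
  have hb : ∀ x ∈ Ω, |dot3 (grad3 u x) (a x)| ≤ ν * nrm (og x) := by
    intro x hx
    rw [hdot x hx]
    calc |dot3 (og x) (a x)| ≤ nrm (og x) * nrm (a x) := abs_dot3_le _ _
      _ ≤ nrm (og x) * ν := mul_le_mul_of_nonneg_left (hbnd x hx) (nrm_nonneg _)
      _ = ν * nrm (og x) := mul_comm _ _
  set U : Set V3 := {x | w x ≠ 0} with hUdef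
  have hclosU : closure Ω ⊆ U := fun x hx => hw0 x hx
  have hKc : IsCompact (closure Ω) := hbdd.isCompact_closure
  have hogcont : ContinuousOn og U := by
    have hnrmi : ContinuousOn (fun x => (nrm (w x))⁻¹) U :=
      ContinuousOn.inv₀ ((continuous_nrm.comp hwc).continuousOn)
        (fun x hx => (nrm_pos _ hx).ne')
    have hhat : ContinuousOn (hatw w) U := hnrmi.smul hwc.continuousOn
    exact continuousOn_cross3 hhat
      (continuousOn_cross3 (continuous_grad3 hu).continuousOn hhat)
  have hInt_A : MeasureTheory.IntegrableOn (fun x => u x ^ 2) Ω :=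
    (((hu.continuous.pow 2).continuousOn).integrableOn_compact hKc).mono_set subset_closure
  have hInt_B : MeasureTheory.IntegrableOn (fun x => dot3 (og x) (og x)) Ω :=
    (((continuousOn_dot3 hogcont hogcont).mono hclosU).integrableOn_compact hKc).mono_set
      subset_closure
  have hInt_C : MeasureTheory.IntegrableOn (fun x => |u x| * nrm (og x)) Ω := by
    have hcc : ContinuousOn (fun x => |u x| * nrm (og x)) U :=
      (hu.continuous.abs.continuousOn).mul (continuous_nrm.comp_continuousOn hogcont)
    exact ((hcc.mono hclosU).integrableOn_compact hKc).mono_set subset_closure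
  have ha1 : ContDiff ℝ 1 a := ha.of_le one_le_wtop
  have hdivc : Continuous fun x => divg a x := by
    have hc : ∀ i : Fin 3, Continuous fun x => pd i (fun y => a y i) x := fun i =>
      continuous_pd (contDiff_pi.mp ha1 i) i
    have heq : (fun x => divg a x) = fun x => ∑ i : Fin 3, pd i (fun y => a y i) x := rfl
    rw [heq]
    exact continuous_finset_sum _ fun i _ => hc i
  have hdotua : Continuous fun x => dot3 (grad3 u x) (a x) :=
    continuous_dot3 (continuous_grad3 hu) ha.continuous
  have hInt_D : MeasureTheory.IntegrableOn (fun x => u x ^ 2 * divg a x) Ω :=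
    ((((hu.continuous.pow 2).mul hdivc).continuousOn).integrableOn_compact hKc).mono_set
      subset_closure
  have hInt_E : MeasureTheory.IntegrableOn
      (fun x => 2 * u x * dot3 (grad3 u x) (a x)) Ω :=
    ((((continuous_const.mul hu.continuous).mul hdotua).continuousOn).integrableOn_compact
      hKc).mono_set subset_closure
  -- the divergence identity
  have hid := integral_identity Ω hΩ hbdd a ha u hu hubdry
  have hsplit : (∫ x in Ω, (u x ^ 2 * divg a x + 2 * u x * dot3 (grad3 u x) (a x)))
      = (∫ x in Ω, u x ^ 2 * divg a x)
        + ∫ x in Ω, 2 * u x * dot3 (grad3 u x) (a x) :=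
    MeasureTheory.integral_add hInt_D hInt_E
  set A : ℝ := ∫ x in Ω, u x ^ 2 with hAdef
  set B : ℝ := ∫ x in Ω, dot3 (og x) (og x) with hBdef
  set C : ℝ := ∫ x in Ω, |u x| * nrm (og x) with hCdef
  have hA0 : 0 ≤ A := MeasureTheory.setIntegral_nonneg hΩ.measurableSet
    (fun x _ => sq_nonneg _)
  have hB0 : 0 ≤ B := MeasureTheory.setIntegral_nonneg hΩ.measurableSet
    (fun x _ => dot3_self_nonneg _)
  -- step 1 : ε A ≤ ∫ u² div a
  have step1 : ε * A ≤ ∫ x in Ω, u x ^ 2 * divg a x := by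
    have h1 : (∫ x in Ω, ε * u x ^ 2) ≤ ∫ x in Ω, u x ^ 2 * divg a x := by
      apply MeasureTheory.setIntegral_mono_on (hInt_A.const_mul ε) hInt_D hΩ.measurableSet
      intro x hx
      have := hdiv x hx
      nlinarith [sq_nonneg (u x)]
    rwa [MeasureTheory.integral_const_mul] at h1
  -- step 2 : ∫ u² div a = - ∫ 2 u ∇u·a
  have step2 : (∫ x in Ω, u x ^ 2 * divg a x)
      = - ∫ x in Ω, 2 * u x * dot3 (grad3 u x) (a x) := by linarith [hid, hsplit]
  -- step 3 : - ∫ 2 u ∇u·a ≤ 2 ν C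
  have step3 : (- ∫ x in Ω, 2 * u x * dot3 (grad3 u x) (a x)) ≤ 2 * ν * C := by
    have h1 : (∫ x in Ω, -(2 * u x * dot3 (grad3 u x) (a x)))
        ≤ ∫ x in Ω, 2 * ν * (|u x| * nrm (og x)) := by
      apply MeasureTheory.setIntegral_mono_on hInt_E.neg (hInt_C.const_mul (2 * ν))
        hΩ.measurableSet
      intro x hx
      have hbx := hb x hx
      have habs : |2 * u x * dot3 (grad3 u x) (a x)|
          = 2 * |u x| * |dot3 (grad3 u x) (a x)| := by
        rw [abs_mul, abs_mul]
        simp [abs_of_nonneg (by norm_num : (0:ℝ) ≤ 2)]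
      calc -(2 * u x * dot3 (grad3 u x) (a x))
          ≤ |2 * u x * dot3 (grad3 u x) (a x)| := neg_le_abs _
        _ = 2 * |u x| * |dot3 (grad3 u x) (a x)| := habs
        _ ≤ 2 * |u x| * (ν * nrm (og x)) := by
            apply mul_le_mul_of_nonneg_left hbx (by positivity)
        _ = 2 * ν * (|u x| * nrm (og x)) := by ring
    rw [MeasureTheory.integral_neg, MeasureTheory.integral_const_mul] at h1
    exact h1
  have hMain0 : ε * A ≤ 2 * ν * C := by linarith
  -- step 4 : Young-type bound
  have hmain : ∀ t : ℝ, 0 < t → ε * A ≤ ν * t * A + ν * t⁻¹ * B := by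
    intro t ht
    have h1 : C ≤ ∫ x in Ω, (t / 2 * u x ^ 2 + 1 / (2 * t) * dot3 (og x) (og x)) := by
      apply MeasureTheory.setIntegral_mono_on hInt_C
        ((hInt_A.const_mul (t / 2)).add (hInt_B.const_mul (1 / (2 * t))))
        hΩ.measurableSet
      intro x hx
      have hno : dot3 (og x) (og x) = nrm (og x) ^ 2 := (nrm_sq _).symm
      simp only [Pi.add_apply]
      rw [hno]
      have h2 : 2 * t * (|u x| * nrm (og x)) ≤ t ^ 2 * |u x| ^ 2 + nrm (og x) ^ 2 := by
        nlinarith [sq_nonneg (t * |u x| - nrm (og x))]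
      have h3 : |u x| * nrm (og x) = (2 * t * (|u x| * nrm (og x))) / (2 * t) := by
        field_simp
      have h4 : (2 * t * (|u x| * nrm (og x))) / (2 * t)
          ≤ (t ^ 2 * |u x| ^ 2 + nrm (og x) ^ 2) / (2 * t) :=
        div_le_div_of_nonneg_right h2 (by positivity)
      have h5 : (t ^ 2 * |u x| ^ 2 + nrm (og x) ^ 2) / (2 * t)
          = t / 2 * u x ^ 2 + 1 / (2 * t) * nrm (og x) ^ 2 := by
        rw [← sq_abs (u x)]
        field_simp
      linarith [h3 ▸ (h5 ▸ h4)]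
    have h2 : (∫ x in Ω, (t / 2 * u x ^ 2 + 1 / (2 * t) * dot3 (og x) (og x)))
        = t / 2 * A + 1 / (2 * t) * B := by
      rw [MeasureTheory.integral_add (hInt_A.const_mul (t / 2))
        (hInt_B.const_mul (1 / (2 * t))), MeasureTheory.integral_const_mul,
        MeasureTheory.integral_const_mul]
    have h3 : C ≤ t / 2 * A + 1 / (2 * t) * B := by rw [h2] at h1; exact h1
    have h4 : 2 * ν * C ≤ 2 * ν * (t / 2 * A + 1 / (2 * t) * B) :=
      mul_le_mul_of_nonneg_left h3 (by positivity)
    have h5 : 2 * ν * (t / 2 * A + 1 / (2 * t) * B) = ν * t * A + ν * t⁻¹ * B := by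
      field_simp
    linarith
  -- conclusion
  by_cases hA : A = 0
  · rw [hA, Real.sqrt_zero, mul_zero]
    exact Real.sqrt_nonneg _
  have hA' : 0 < A := lt_of_le_of_ne hA0 (Ne.symm hA)
  by_cases hB : B = 0
  · exfalso
    have h := hmain (ε / (2 * ν)) (by positivity)
    rw [hB, mul_zero, add_zero] at h
    have : ν * (ε / (2 * ν)) = ε / 2 := by field_simp
    rw [this] at h
    nlinarith
  have hB' : 0 < B := lt_of_le_of_ne hB0 (Ne.symm hB)
  set sA : ℝ := Real.sqrt A with hsAdef
  set sB : ℝ := Real.sqrt B with hsBdef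
  have hsA : 0 < sA := Real.sqrt_pos.2 hA'
  have hsB : 0 < sB := Real.sqrt_pos.2 hB'
  have hAA : sA * sA = A := Real.mul_self_sqrt hA0
  have hBB : sB * sB = B := Real.mul_self_sqrt hB0
  have ht := hmain (sB / sA) (by positivity)
  have heq : ν * (sB / sA) * A + ν * (sB / sA)⁻¹ * B = 2 * ν * (sA * sB) := by
    rw [← hAA, ← hBB]
    field_simp
    ring
  rw [heq] at ht
  have hfin : ε * sA ≤ 2 * ν * sB := by
    have h1 : ε * sA * sA ≤ 2 * ν * sB * sA := by nlinarith
    exact le_of_mul_le_mul_right h1 hsA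
  rw [div_mul_eq_mul_div, div_le_iff₀ (by positivity)]
  linarith

end Key
section Neg

lemma divg_neg (f : V3 → V3) (x : V3) : divg (fun y => -f y) x = -divg f x := by
  unfold divg pd
  rw [← Finset.sum_neg_distrib]
  congr 1; funext i
  have h : (fun y => (-f y) i) = fun y => -(f y i) := rfl
  rw [h, fderiv_fun_neg]
  simp

lemma nrm_neg (v : V3) : nrm (-v) = nrm v := by
  unfold nrm
  rw [show dot3 (-v) (-v) = dot3 v v from by
    simp only [dot3, Fin.sum_univ_three, Pi.neg_apply]; ring]

lemma dot3_neg_left (v b : V3) : dot3 (-v) b = -dot3 v b := by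
  simp only [dot3, Fin.sum_univ_three, Pi.neg_apply]
  ring

end Neg

theorem poincare_like_epi2D'
    (Ω : Set V3) (hΩ : IsOpen Ω) (hconn : IsConnected Ω)
    (hbdd : Bornology.IsBounded Ω)
    (φ ψ θ : V3 → ℝ) (hφ : ContDiff ℝ (⊤ : ℕ∞) φ) (hψ : ContDiff ℝ (⊤ : ℕ∞) ψ)
    (hθ : ContDiff ℝ (⊤ : ℕ∞) θ)
    (w : V3 → V3) (hwdef : w = fun x => grad3 φ x + ψ x • grad3 θ x)
    (hw0 : ∀ x ∈ closure Ω, w x ≠ 0)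
    (hbc : TangentBC Ω w)
    (ε ν : ℝ) (hε : 0 < ε) (hν : 0 < ν)
    (hhel : ∀ x ∈ Ω, ε ≤ |dot3 (w x) (curl3 w x)|)
    (hsup : ∀ x ∈ closure Ω, nrm (w x) * nrm (grad3 φ x) ≤ ν)
    (u : V3 → ℝ) (hu : ContDiff ℝ 1 u) (hubdry : ∀ x ∈ frontier Ω, u x = 0) :
    (ε / (2 * ν)) * Real.sqrt (∫ x in Ω, u x ^ 2) ≤
      Real.sqrt (∫ x in Ω, dot3 (oGrad w u x) (oGrad w u x)) := by
  have hφ' : ContDiff ℝ (⊤ : ℕ∞) φ := hφ.of_le (by simp)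
  have hψ' : ContDiff ℝ (⊤ : ℕ∞) ψ := hψ.of_le (by simp)
  have hθ' : ContDiff ℝ (⊤ : ℕ∞) θ := hθ.of_le (by simp)
  have hwsm : ContDiff ℝ (⊤ : ℕ∞) w := by
    rw [hwdef]
    apply contDiff_pi.2
    intro j
    exact ((contDiff_pd hφ' j).add (hψ'.mul (contDiff_pd hθ' j)))
  have hwcont : Continuous w := hwsm.continuous
  have hwjc : ∀ j : Fin 3, ContDiff ℝ (⊤ : ℕ∞) (fun y => w y j) :=
    fun j => contDiff_pi.mp hwsm j
  have hgj : ∀ j : Fin 3, ContDiff ℝ (⊤ : ℕ∞) (fun y => pd j φ y) :=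
    fun j => contDiff_pd hφ' j
  set a0 : V3 → V3 := fun y => cross3 (w y) (grad3 φ y) with ha0def
  have ha0 : ContDiff ℝ (⊤ : ℕ∞) a0 := by
    apply contDiff_pi.2
    intro i
    fin_cases i
    · exact ((hwjc 1).mul (hgj 2)).sub ((hwjc 2).mul (hgj 1))
    · exact ((hwjc 2).mul (hgj 0)).sub ((hwjc 0).mul (hgj 2))
    · exact ((hwjc 0).mul (hgj 1)).sub ((hwjc 1).mul (hgj 0))
  have horth : ∀ x, dot3 (a0 x) (w x) = 0 := by
    intro x
    simp only [ha0def, dot3, cross3, Fin.sum_univ_three, Matrix.cons_val_zero,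
      Matrix.cons_val_one, Matrix.head_cons, Matrix.cons_val_two, Matrix.tail_cons]
    ring
  have hbnd : ∀ x ∈ Ω, nrm (a0 x) ≤ ν := fun x hx =>
    (nrm_cross3_le _ _).trans (hsup x (subset_closure hx))
  have hdiveq : ∀ x, divg a0 x = dot3 (w x) (curl3 w x) :=
    div_cross_eq φ ψ θ hφ' hψ' hθ' w hwdef
  -- continuity of helicity
  have hpwc : ∀ (i j : Fin 3), Continuous fun x => pd i (fun y => w y j) x := fun i j =>
    continuous_pd ((hwjc j).of_le one_le_wtop) i
  have hcurlc : Continuous fun x => curl3 w x := by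
    apply continuous_pi
    intro i
    fin_cases i
    · exact (hpwc 1 2).sub (hpwc 2 1)
    · exact (hpwc 2 0).sub (hpwc 0 2)
    · exact (hpwc 0 1).sub (hpwc 1 0)
  have hscont : Continuous fun x => dot3 (w x) (curl3 w x) :=
    continuous_dot3 hwcont hcurlc
  rcases sign_dichotomy Ω hconn hscont hε hhel with hpos | hneg
  · exact key_estimate Ω hΩ hbdd w hwcont hw0 a0 ha0 horth ε ν hε hν
      (fun x hx => by rw [hdiveq x]; exact hpos x hx) hbnd u hu hubdry
  · refine key_estimate Ω hΩ hbdd w hwcont hw0 (fun y => -a0 y) ha0.neg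
      (fun x => by rw [dot3_neg_left, horth, neg_zero]) ε ν hε hν
      (fun x hx => ?_) (fun x hx => ?_) u hu hubdry
    · rw [divg_neg, hdiveq x]
      have := hneg x hx
      linarith
    · show nrm (-(a0 x)) ≤ ν
      rw [nrm_neg]
      exact hbnd x hx
/-- Poincaré-like inequality for epi-2D (Clebsch) fields
`w = ∇φ + ψ∇θ` with `w·n = 0` on `∂Ω` and `|w·(∇×w)| ≥ ε > 0` on `Ω`:
`‖∇⊥u‖ ≥ (ε/(2ν))‖u‖` with `ν = sup_{Ω̄} |w||∇φ|`, for all `u ∈ C¹(Ω̄)`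
vanishing on `∂Ω`. -/
theorem poincare_like_epi2D
    (Ω : Set V3) (hΩ : IsOpen Ω) (hconn : IsConnected Ω)
    (hbdd : Bornology.IsBounded Ω)
    (φ ψ θ : V3 → ℝ) (hφ : ContDiff ℝ (⊤ : ℕ∞) φ) (hψ : ContDiff ℝ (⊤ : ℕ∞) ψ)
    (hθ : ContDiff ℝ (⊤ : ℕ∞) θ)
    (w : V3 → V3) (hwdef : w = fun x => grad3 φ x + ψ x • grad3 θ x)
    (hw0 : ∀ x ∈ closure Ω, w x ≠ 0)
    (hbc : TangentBC Ω w)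
    (ε ν : ℝ) (hε : 0 < ε) (hν : 0 < ν)
    (hhel : ∀ x ∈ Ω, ε ≤ |dot3 (w x) (curl3 w x)|)
    (hsup : ∀ x ∈ closure Ω, nrm (w x) * nrm (grad3 φ x) ≤ ν)
    (u : V3 → ℝ) (hu : ContDiff ℝ 1 u) (hubdry : ∀ x ∈ frontier Ω, u x = 0) :
    (ε / (2 * ν)) * Real.sqrt (∫ x in Ω, u x ^ 2) ≤
      Real.sqrt (∫ x in Ω, dot3 (oGrad w u x) (oGrad w u x)) := by
  exact poincare_like_epi2D' Ω hΩ hconn hbdd φ ψ θ hφ hψ hθ w hwdef hw0 hbc ε ν hε hν hhel hsup u hu hubdry
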